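/- arXiv:2510.22316 — 3 statements merged into one kernel-verified Lean document; each statement's English description precedes it below -/
import Mathlib

section
/- Let G=(V,E) be a finite directed graph whose vertices are points of a metric space, and let q be a query point such that all pairwise distances from vertices to q are distinct. Let N_{i,q} denote the i-th nearest vertex to q, and let NG_{S,q} be the subgraph of G induced by {N_{1,q},...,N_{S,q}}. If N_{i,q} can reach N_{j,q} by a directed path in NG_{S,q} (with 1 ≤ i,j ≤ S), then greedy beam search on G with query q, entry point N_{i,q}, and result-list size L ≥ S visits N_{j,q} before terminating. -/
/-!
Greedy search keeps, for the vertices of rank at most `L`, two invariants: a visited vertex of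
rank at most `L` is never evicted from `R` (everything that could evict it is farther), and a
visited vertex of rank at most `L` that has left `C` has had all its neighbours visited. Such a
vertex can therefore not still be in `C` when the search stops: it would lie in `R` and be at
least as close as the popped candidate, which is farther than all of `R`. Since every expansion
moves one vertex from `C` to `visited \ C`, the fuel suffices, and at termination the visited
vertices of rank at most `L ≥ S` are closed under the edges of `NG_{S,q}`.
-/

attribute [local instance] Classical.propDecidable

/-- The state of greedy beam search (Algorithm 1): the set `C` of unexpanded
candidates, the result set `R`, and the set of visited vertices. -/
structure SState (V : Type*) where
  C : Finset V
  R : Finset V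
  visited : Finset V

variable {V : Type*} [Fintype V] [DecidableEq V]

/-- `rank dist x = i` means `x` is the `i`-th nearest vertex to the query
(with respect to the distance-to-query function `dist`), i.e. `F_{x,q} = i`. -/
noncomputable def rank (dist : V → ℝ) (x : V) : ℕ :=
  (Finset.univ.filter fun y => dist y ≤ dist x).card

/-- Keep only the `L` closest (to the query) elements of `R`. -/
noncomputable def truncate (dist : V → ℝ) (L : ℕ) (R : Finset V) : Finset V :=
  R.filter fun x => (R.filter fun y => dist y ≤ dist x).card ≤ L

/-- An element of `C` closest to the query. -/
noncomputable def argmin (dist : V → ℝ) (C : Finset V) (h : C.Nonempty) : V :=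
  (C.exists_min_image dist h).choose

/-- Insertion condition of Algorithm 1: `|R| < L` or `δ(v,q) < d_max`. -/
def insertCond (dist : V → ℝ) (L : ℕ) (R : Finset V) (v : V) : Prop :=
  R.card < L ∨ ∃ x ∈ R, dist v < dist x

/-- Inner loop of Algorithm 1: process the (unvisited) neighbors of the popped
vertex one by one, inserting them into `C` and `R` and truncating `R` to its
`L` closest elements. -/
noncomputable def insertLoop (dist : V → ℝ) (L : ℕ) : List V → SState V → SState V
  | [], s => s
  | v :: vs, s =>
    insertLoop dist L vs <|
      if v ∈ s.visited then s
      else if insertCond dist L s.R v then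
        ⟨insert v s.C, truncate dist L (insert v s.R), insert v s.visited⟩
      else ⟨s.C, s.R, insert v s.visited⟩

/-- Main loop of Algorithm 1 (greedy beam search) with explicit fuel.
At each step the closest unexpanded candidate `u` is popped; the loop breaks if
`δ(u,q) > d_max` (i.e. every element of the nonempty `R` is strictly closer
than `u`), and otherwise expands `u`. -/
noncomputable def gloop (Adj : V → V → Prop) (dist : V → ℝ) (L : ℕ) :
    ℕ → SState V → SState V
  | 0, s => s
  | n + 1, s =>
    if hC : s.C.Nonempty then
      let u := argmin dist s.C hC
      if s.R.Nonempty ∧ ∀ x ∈ s.R, dist x < dist u then s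
      else
        gloop Adj dist L n
          (insertLoop dist L ((Finset.univ.filter fun v => Adj u v).toList)
            ⟨s.C.erase u, s.R, s.visited⟩)
    else s

/-- Greedy beam search on the graph `Adj` with distance-to-query `dist`,
result-list size `L` and entry point `ep`. -/
noncomputable def search (Adj : V → V → Prop) (dist : V → ℝ) (L : ℕ) (ep : V) : SState V :=
  gloop Adj dist L (Fintype.card V + 1) ⟨{ep}, {ep}, {ep}⟩

/-- Adjacency of `NG_{S,q}`, the subgraph of `Adj` induced by the `S` nearest
vertices to the query. -/
def AdjS (Adj : V → V → Prop) (dist : V → ℝ) (S : ℕ) (a b : V) : Prop :=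
  Adj a b ∧ rank dist a ≤ S ∧ rank dist b ≤ S

omit [Fintype V] [DecidableEq V] in
lemma argmin_mem (dist : V → ℝ) (C : Finset V) (h : C.Nonempty) : argmin dist C h ∈ C :=
  (C.exists_min_image dist h).choose_spec.1

omit [Fintype V] [DecidableEq V] in
lemma argmin_le (dist : V → ℝ) {C : Finset V} (h : C.Nonempty) {x : V} (hx : x ∈ C) :
    dist (argmin dist C h) ≤ dist x :=
  (C.exists_min_image dist h).choose_spec.2 x hx

omit [DecidableEq V] in
lemma mem_truncate {dist : V → ℝ} {L : ℕ} {R : Finset V} {w : V}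
    (hw : w ∈ R) (hrank : rank dist w ≤ L) : w ∈ truncate dist L R :=
  Finset.mem_filter.2 ⟨hw, (Finset.card_le_card (Finset.monotone_filter_left _
    (Finset.subset_univ R))).trans hrank⟩

lemma lt_rank_of_not_insertCond {dist : V → ℝ} {L : ℕ} {R : Finset V} {v : V}
    (hvR : v ∉ R) (h : ¬ insertCond dist L R v) : L < rank dist v := by
  simp only [insertCond, not_or, not_lt, not_exists, not_and] at h
  have hsub : insert v R ⊆ Finset.univ.filter fun y => dist y ≤ dist v := by
    intro x hx
    rcases Finset.mem_insert.1 hx with rfl | hx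
    · simp
    · simpa using h.2 x hx
  have := Finset.card_le_card hsub
  rw [Finset.card_insert_of_notMem hvR] at this
  exact h.1.trans_lt this

omit [Fintype V] in
lemma insertLoop_cons (dist : V → ℝ) (L : ℕ) (v : V) (vs : List V) (s : SState V) :
    insertLoop dist L (v :: vs) s = insertLoop dist L vs (insertLoop dist L [v] s) :=
  rfl

namespace SState

variable (Adj : V → V → Prop) (dist : V → ℝ) (L : ℕ)

structure Invariant (s : SState V) : Prop where
  C_subset : s.C ⊆ s.visited
  R_subset : s.R ⊆ s.visited
  mem_R : ∀ w, rank dist w ≤ L → w ∈ s.visited → w ∈ s.R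

structure Grows (s t : SState V) : Prop where
  visited_subset : s.visited ⊆ t.visited
  C_subset : s.C ⊆ t.C
  mem_C_or_notMem_visited : ∀ x ∈ t.C, x ∈ s.C ∨ x ∉ s.visited
  mem_visited_or_mem_C :
    ∀ w, rank dist w ≤ L → w ∈ t.visited → w ∈ s.visited ∨ w ∈ t.C

def Saturated (s : SState V) : Prop :=
  ∀ w, rank dist w ≤ L → w ∈ s.visited → w ∉ s.C → ∀ z, Adj w z → z ∈ s.visited

noncomputable def expand (s : SState V) (u : V) : SState V :=
  insertLoop dist L (Finset.univ.filter fun v => Adj u v).toList ⟨s.C.erase u, s.R, s.visited⟩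

variable {Adj dist L}

omit [DecidableEq V] in
lemma Invariant.singleton (ep : V) : (⟨{ep}, {ep}, {ep}⟩ : SState V).Invariant dist L :=
  ⟨subset_rfl, subset_rfl, fun _ _ hw => hw⟩

namespace Grows

omit [DecidableEq V] in
lemma refl (s : SState V) : s.Grows dist L s :=
  ⟨subset_rfl, subset_rfl, fun _ hx => Or.inl hx, fun _ _ hw => Or.inl hw⟩

omit [DecidableEq V] in
lemma trans {s t r : SState V} (h₁ : s.Grows dist L t) (h₂ : t.Grows dist L r) :
    s.Grows dist L r where
  visited_subset := h₁.visited_subset.trans h₂.visited_subset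
  C_subset := h₁.C_subset.trans h₂.C_subset
  mem_C_or_notMem_visited x hx := by
    rcases h₂.mem_C_or_notMem_visited x hx with hx | hx
    · exact h₁.mem_C_or_notMem_visited x hx
    · exact Or.inr fun hs => hx (h₁.visited_subset hs)
  mem_visited_or_mem_C w hw hwr := by
    rcases h₂.mem_visited_or_mem_C w hw hwr with hwt | hwr
    · exact (h₁.mem_visited_or_mem_C w hw hwt).imp_right fun h => h₂.C_subset h
    · exact Or.inr hwr

omit [DecidableEq V] in
lemma notMem_C {s t : SState V} (h : s.Grows dist L t) {x : V} (hx : x ∈ s.visited)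
    (hxC : x ∉ s.C) : x ∉ t.C := fun hxt =>
  (h.mem_C_or_notMem_visited x hxt).elim hxC (· hx)

end Grows

section insertLoop

variable {s : SState V}

omit [Fintype V] in
lemma mem_insertLoop_singleton_visited (v : V) :
    v ∈ (insertLoop dist L [v] s).visited := by
  simp only [insertLoop]
  split_ifs with hv <;> simp [hv]

lemma Invariant.insertLoop_singleton (h : s.Invariant dist L) (v : V) :
    (insertLoop dist L [v] s).Invariant dist L := by
  simp only [insertLoop]
  split_ifs with hv hcond
  · exact h
  · refine ⟨Finset.insert_subset_insert v h.C_subset,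
      (Finset.filter_subset _ _).trans (Finset.insert_subset_insert v h.R_subset), ?_⟩
    intro w hw hwv
    refine mem_truncate ?_ hw
    rcases Finset.mem_insert.1 hwv with rfl | hwv
    · exact Finset.mem_insert_self _ _
    · exact Finset.mem_insert_of_mem (h.mem_R w hw hwv)
  · refine ⟨h.C_subset.trans (Finset.subset_insert _ _),
      h.R_subset.trans (Finset.subset_insert _ _), ?_⟩
    intro w hw hwv
    rcases Finset.mem_insert.1 hwv with rfl | hwv
    · exact absurd hw (lt_rank_of_not_insertCond (fun hR => hv (h.R_subset hR)) hcond).not_ge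
    · exact h.mem_R w hw hwv

lemma Invariant.grows_insertLoop_singleton (h : s.Invariant dist L) (v : V) :
    s.Grows dist L (insertLoop dist L [v] s) := by
  simp only [insertLoop]
  split_ifs with hv hcond
  · exact Grows.refl s
  · refine ⟨Finset.subset_insert _ _, Finset.subset_insert _ _, ?_, ?_⟩
    · intro x hx
      rcases Finset.mem_insert.1 hx with rfl | hx
      exacts [Or.inr hv, Or.inl hx]
    · intro w _ hwv
      rcases Finset.mem_insert.1 hwv with rfl | hwv
      exacts [Or.inr (Finset.mem_insert_self _ _), Or.inl hwv]
  · refine ⟨Finset.subset_insert _ _, subset_rfl, fun x hx => Or.inl hx, ?_⟩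
    intro w hw hwv
    rcases Finset.mem_insert.1 hwv with rfl | hwv
    · exact absurd hw (lt_rank_of_not_insertCond (fun hR => hv (h.R_subset hR)) hcond).not_ge
    · exact Or.inl hwv

lemma Invariant.insertLoop (h : s.Invariant dist L) (l : List V) :
    (_root_.insertLoop dist L l s).Invariant dist L := by
  induction l generalizing s with
  | nil => exact h
  | cons v vs ih => exact ih (h.insertLoop_singleton v)

lemma Invariant.grows_insertLoop (h : s.Invariant dist L) (l : List V) :
    s.Grows dist L (_root_.insertLoop dist L l s) := by
  induction l generalizing s with
  | nil => exact Grows.refl s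
  | cons v vs ih => exact (h.grows_insertLoop_singleton v).trans (ih (h.insertLoop_singleton v))

lemma Invariant.mem_insertLoop_visited (h : s.Invariant dist L) {l : List V} {x : V}
    (hx : x ∈ l) : x ∈ (_root_.insertLoop dist L l s).visited := by
  induction l generalizing s with
  | nil => cases hx
  | cons v vs ih =>
    rw [insertLoop_cons]
    rcases List.mem_cons.1 hx with rfl | hx
    · exact ((h.insertLoop_singleton x).grows_insertLoop vs).visited_subset
        (mem_insertLoop_singleton_visited x)
    · exact ih (h.insertLoop_singleton v) hx

end insertLoop

section expand

variable {s : SState V} {u : V}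

lemma Invariant.pop (h : s.Invariant dist L) (u : V) :
    (⟨s.C.erase u, s.R, s.visited⟩ : SState V).Invariant dist L :=
  ⟨(Finset.erase_subset _ _).trans h.C_subset, h.R_subset, h.mem_R⟩

lemma Invariant.expand (h : s.Invariant dist L) (u : V) :
    (s.expand Adj dist L u).Invariant dist L :=
  (h.pop u).insertLoop _

lemma Invariant.visited_subset_expand (h : s.Invariant dist L) (u : V) :
    s.visited ⊆ (s.expand Adj dist L u).visited :=
  ((h.pop u).grows_insertLoop _).visited_subset

lemma Invariant.card_sdiff_lt_expand (h : s.Invariant dist L) (hu : u ∈ s.C) :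
    (s.visited \ s.C).card <
      ((s.expand Adj dist L u).visited \ (s.expand Adj dist L u).C).card := by
  have hgrows := (h.pop u).grows_insertLoop (Finset.univ.filter fun v => Adj u v).toList
  refine Finset.card_lt_card <|
    Finset.ssubset_iff.2 ⟨u, fun hu' => (Finset.mem_sdiff.1 hu').2 hu, ?_⟩
  intro x hx
  have hx' : x ∈ s.visited ∧ x ∉ s.C.erase u := by
    rcases Finset.mem_insert.1 hx with rfl | hx
    · exact ⟨h.C_subset hu, Finset.notMem_erase x _⟩
    · obtain ⟨hxv, hxC⟩ := Finset.mem_sdiff.1 hx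
      exact ⟨hxv, fun hxC' => hxC (Finset.mem_of_mem_erase hxC')⟩
  exact Finset.mem_sdiff.2 ⟨hgrows.visited_subset hx'.1, hgrows.notMem_C hx'.1 hx'.2⟩

lemma Invariant.saturated_expand (h : s.Invariant dist L) (hsat : s.Saturated Adj dist L)
    (hu : u ∈ s.C) : (s.expand Adj dist L u).Saturated Adj dist L := by
  have hgrows := (h.pop u).grows_insertLoop (Finset.univ.filter fun v => Adj u v).toList
  intro w hw hwv hwC z hz
  have hws : w ∈ s.visited := (hgrows.mem_visited_or_mem_C w hw hwv).resolve_right hwC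
  by_cases hwu : w = u
  · subst hwu
    exact (h.pop w).mem_insertLoop_visited (by simpa using hz)
  · have hwC' : w ∉ s.C := fun hwC' => hwC (hgrows.C_subset (Finset.mem_erase.2 ⟨hwu, hwC'⟩))
    exact h.visited_subset_expand u (hsat w hw hws hwC' z hz)

end expand

omit [DecidableEq V] in
lemma Invariant.notMem_C_of_stop {s : SState V} (h : s.Invariant dist L) (hC : s.C.Nonempty)
    (hstop : ∀ x ∈ s.R, dist x < dist (argmin dist s.C hC)) {w : V} (hw : rank dist w ≤ L)
    (hwv : w ∈ s.visited) : w ∉ s.C := fun hwC =>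
  (hstop w (h.mem_R w hw hwv)).not_ge (argmin_le dist hC hwC)

lemma Invariant.visited_subset_gloop : ∀ (n : ℕ) {s : SState V}, s.Invariant dist L →
    s.visited ⊆ (gloop Adj dist L n s).visited
  | 0, _, _ => subset_rfl
  | n + 1, s, h => by
    simp only [gloop]
    split_ifs with hC
    · exact subset_rfl
    · exact (h.visited_subset_expand _).trans ((h.expand _).visited_subset_gloop n)
    · exact subset_rfl

lemma Invariant.gloop_closed : ∀ (n : ℕ) {s : SState V}, s.Invariant dist L →
    s.Saturated Adj dist L → Fintype.card V < n + (s.visited \ s.C).card →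
    ∀ w, rank dist w ≤ L → w ∈ (gloop Adj dist L n s).visited →
      ∀ z, Adj w z → z ∈ (gloop Adj dist L n s).visited
  | 0, s, _, _, hfuel => absurd hfuel (by simpa using Finset.card_le_univ (s.visited \ s.C))
  | n + 1, s, h, hsat, hfuel => by
    simp only [gloop]
    split_ifs with hC hstop
    · exact fun w hw hwv => hsat w hw hwv (h.notMem_C_of_stop hC hstop.2 hw hwv)
    · have := h.card_sdiff_lt_expand (Adj := Adj) (argmin_mem dist s.C hC)
      exact (h.expand _).gloop_closed n (h.saturated_expand hsat (argmin_mem dist s.C hC))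
        (by omega)
    · exact fun w hw hwv => hsat w hw hwv fun hwC => hC ⟨w, hwC⟩

end SState

lemma search_closed (Adj : V → V → Prop) (dist : V → ℝ) (L : ℕ) (ep : V) {w z : V}
    (hw : rank dist w ≤ L) (hwv : w ∈ (search Adj dist L ep).visited) (hz : Adj w z) :
    z ∈ (search Adj dist L ep).visited :=
  (SState.Invariant.singleton ep).gloop_closed _
    (fun _ _ hwv hwC => absurd hwv hwC) (by simp) w hw hwv z hz

lemma mem_search_visited_self (Adj : V → V → Prop) (dist : V → ℝ) (L : ℕ) (ep : V) :
    ep ∈ (search Adj dist L ep).visited :=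
  (SState.Invariant.singleton ep).visited_subset_gloop (Adj := Adj) _
    (Finset.mem_singleton_self ep)

theorem greedy_search_visits_of_reachable_in_NG_general
    (Adj : V → V → Prop) (dist : V → ℝ)
    (S L : ℕ) (hL : S ≤ L) (u v : V)
    (hreach : Relation.ReflTransGen (AdjS Adj dist S) u v) :
    v ∈ (search Adj dist L u).visited := by
  induction hreach with
  | refl => exact mem_search_visited_self Adj dist L u
  | tail _ hbc ih => exact search_closed Adj dist L u (hbc.2.1.trans hL) ih hbc.1

/-- If `N_{i,q}` can reach `N_{j,q}` by a directed path inside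
`NG_{S,q}` (`1 ≤ i, j ≤ S`), then greedy beam search with query `q`, entry point
`N_{i,q}` and result-list size `L ≥ S` visits `N_{j,q}` before terminating. -/
theorem greedy_search_visits_of_reachable_in_NG
    (Adj : V → V → Prop) (dist : V → ℝ) (hinj : Function.Injective dist)
    (S L : ℕ) (hL : S ≤ L) (u v : V)
    (hu : rank dist u ≤ S) (hv : rank dist v ≤ S)
    (hreach : Relation.ReflTransGen (AdjS Adj dist S) u v) :
    v ∈ (search Adj dist L u).visited :=
  greedy_search_visits_of_reachable_in_NG_general Adj dist S L hL u v hreach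
end

section
/- The minimum spanning tree of a finite point set in a metric space (with distinct pairwise distances) is a subgraph of the relative neighborhood graph: every MST edge (u,v) satisfies that there is no point w with max(δ(u,w), δ(v,w)) < δ(u,v). -/
/-!
If some `w` were closer to both `u` and `v` than they are to each other, delete the edge `uv`
from `T`: the two remaining components contain `u` and `v`, and `w` lies in one of them, so joining
`w` to the endpoint in the other component gives a spanning tree strictly lighter than `T`.
-/

attribute [local instance] Classical.propDecidable

/-- Total edge weight of a graph `G` on vertex set `V` whose vertices are
realized as points `f : V → M` of a metric space (each edge counted twice,
once in each direction, which does not affect weight comparisons). -/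
noncomputable def weight {V : Type*} [Fintype V] {M : Type*} [MetricSpace M]
    (f : V → M) (G : SimpleGraph V) : ℝ :=
  ∑ u : V, ∑ v : V, if G.Adj u v then dist (f u) (f v) else 0

namespace SimpleGraph

variable {V : Type*} {G : SimpleGraph V} {u v w : V}

lemma Preconnected.reachable_deleteEdges_or (hG : G.Preconnected) (u v a : V) :
    (G.deleteEdges {s(u, v)}).Reachable a u ∨ (G.deleteEdges {s(u, v)}).Reachable a v := by
  obtain ⟨p⟩ := hG a u
  induction p with
  | nil => exact .inl .rfl
  | @cons a b u hab _ ih =>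
    by_cases he : s(a, b) = s(u, v)
    · rcases Sym2.eq_iff.mp he with ⟨rfl, -⟩ | ⟨rfl, -⟩
      · exact .inl .rfl
      · exact .inr .rfl
    · have hab' : (G.deleteEdges {s(u, v)}).Adj a b := deleteEdges_adj.mpr ⟨hab, he⟩
      exact ih.imp hab'.reachable.trans hab'.reachable.trans

lemma IsAcyclic.not_reachable_deleteEdges (hG : G.IsAcyclic) (huv : G.Adj u v)
    (hw : (G.deleteEdges {s(u, v)}).Reachable u w) :
    ¬(G.deleteEdges {s(u, v)}).Reachable v w :=
  fun hvw ↦ isAcyclic_iff_forall_adj_isBridge.mp hG huv (hw.trans hvw.symm)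

theorem IsTree.deleteEdges_sup_edge (hT : G.IsTree) (huv : G.Adj u v)
    (hw : (G.deleteEdges {s(u, v)}).Reachable u w) :
    (G.deleteEdges {s(u, v)} ⊔ edge v w).IsTree := by
  set G₀ := G.deleteEdges {s(u, v)}
  have hvw := hT.isAcyclic.not_reachable_deleteEdges huv hw
  refine ⟨(connected_iff_exists_forall_reachable _).mpr ⟨v, fun a ↦ ?_⟩,
    (hT.isAcyclic.anti (deleteEdges_le _)).sup_edge_of_not_reachable hvw⟩
  have hwv : (G₀ ⊔ edge v w).Adj w v :=
    .inr ((edge_adj ..).mpr ⟨.inr ⟨rfl, rfl⟩, fun h ↦ hvw (h ▸ .rfl)⟩)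
  have huv' : (G₀ ⊔ edge v w).Reachable u v := (hw.mono le_sup_left).trans hwv.reachable
  rcases hT.1.preconnected.reachable_deleteEdges_or u v a with hau | hav
  · exact huv'.symm.trans (hau.mono le_sup_left).symm
  · exact (hav.mono le_sup_left).symm

end SimpleGraph

section Weight

variable {V : Type*} [Fintype V] {M : Type*} [MetricSpace M] (f : V → M)

lemma weight_sup {G H : SimpleGraph V} (h : Disjoint G H) :
    weight f (G ⊔ H) = weight f G + weight f H := by
  simp only [weight, ← Finset.sum_add_distrib]
  refine Finset.sum_congr rfl fun a _ ↦ Finset.sum_congr rfl fun b _ ↦ ?_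
  have : ¬(G.Adj a b ∧ H.Adj a b) := fun hab ↦
    Set.disjoint_left.mp (SimpleGraph.disjoint_edgeSet.mpr h) (G.mem_edgeSet.mpr hab.1)
      (H.mem_edgeSet.mpr hab.2)
  by_cases ha : G.Adj a b <;> by_cases hb : H.Adj a b <;> simp_all

lemma weight_edge {x y : V} (hxy : x ≠ y) :
    weight f (SimpleGraph.edge x y) = 2 * dist (f x) (f y) := by
  calc weight f (SimpleGraph.edge x y)
      = ∑ a, ∑ b, ((if a = x ∧ b = y then dist (f x) (f y) else 0) +
          (if a = y ∧ b = x then dist (f x) (f y) else 0)) := by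
        refine Finset.sum_congr rfl fun a _ ↦ Finset.sum_congr rfl fun b _ ↦ ?_
        by_cases hab : a = x ∧ b = y
        · obtain ⟨rfl, rfl⟩ := hab
          simp [SimpleGraph.edge_adj, hxy, hxy.symm]
        by_cases hba : a = y ∧ b = x
        · obtain ⟨rfl, rfl⟩ := hba
          simp [SimpleGraph.edge_adj, hxy.symm, dist_comm]
        simp [SimpleGraph.edge_adj, hab, hba]
    _ = 2 * dist (f x) (f y) := by simp [Finset.sum_add_distrib, ite_and]; ring

lemma weight_deleteEdges {G : SimpleGraph V} {x y : V} (h : G.Adj x y) :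
    weight f (G.deleteEdges {s(x, y)}) = weight f G - 2 * dist (f x) (f y) := by
  have hG : G.deleteEdges {s(x, y)} ⊔ SimpleGraph.edge x y = G :=
    sdiff_sup_cancel ((G.edge_le_iff).mpr (.inr h))
  have hdisj : Disjoint (G.deleteEdges {s(x, y)}) (SimpleGraph.edge x y) :=
    disjoint_sdiff_self_left
  conv_rhs => rw [← hG, weight_sup f hdisj, weight_edge f h.ne]
  ring

def IsMinSpanningTree (T : SimpleGraph V) : Prop :=
  T.IsTree ∧ ∀ T' : SimpleGraph V, T'.IsTree → weight f T ≤ weight f T'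

variable {f} {T : SimpleGraph V} {u v w : V}

lemma IsMinSpanningTree.dist_le_of_reachable_deleteEdges (hT : IsMinSpanningTree f T)
    (huv : T.Adj u v) (hw : (T.deleteEdges {s(u, v)}).Reachable u w) :
    dist (f u) (f v) ≤ dist (f v) (f w) := by
  have hvw := hT.1.isAcyclic.not_reachable_deleteEdges huv hw
  have hdisj : Disjoint (T.deleteEdges {s(u, v)}) (SimpleGraph.edge v w) :=
    (SimpleGraph.disjoint_edge _).mpr fun h ↦ hvw h.reachable
  have hne : v ≠ w := by rintro rfl; exact hvw .rfl
  have := hT.2 _ (hT.1.deleteEdges_sup_edge huv hw)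
  rw [weight_sup f hdisj, weight_deleteEdges f huv, weight_edge f hne] at this
  linarith

lemma IsMinSpanningTree.dist_le_max (hT : IsMinSpanningTree f T) (huv : T.Adj u v) (w : V) :
    dist (f u) (f v) ≤ max (dist (f u) (f w)) (dist (f v) (f w)) := by
  rcases hT.1.1.preconnected.reachable_deleteEdges_or u v w with hwu | hwv
  · exact (hT.dist_le_of_reachable_deleteEdges huv hwu.symm).trans (le_max_right _ _)
  · rw [Sym2.eq_swap] at hwv
    rw [dist_comm]
    exact (hT.dist_le_of_reachable_deleteEdges huv.symm hwv.symm).trans (le_max_left _ _)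

end Weight

theorem mst_subgraph_rng_general
    {V : Type*} [Fintype V] {M : Type*} [MetricSpace M]
    (f : V → M)
    (T : SimpleGraph V) (hT : T.IsTree)
    (hmin : ∀ T' : SimpleGraph V, T'.IsTree → weight f T ≤ weight f T')
    (u v : V) (huv : T.Adj u v) :
    ¬ ∃ w : V, max (dist (f u) (f w)) (dist (f v) (f w)) < dist (f u) (f v) := by
  rintro ⟨w, hw⟩
  exact (IsMinSpanningTree.dist_le_max ⟨hT, hmin⟩ huv w).not_gt hw

/-- The minimum spanning tree of a finite point set in a
metric space with distinct pairwise distances is a subgraph of the relative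
neighborhood graph: every MST edge `(u,v)` satisfies that there is no point `w`
with `max (δ(u,w)) (δ(v,w)) < δ(u,v)`. -/
theorem mst_subgraph_rng
    {V : Type*} [Fintype V] [DecidableEq V] {M : Type*} [MetricSpace M]
    (f : V → M) (hinj : Function.Injective f)
    (hdist : ∀ a b c d : V, a ≠ b → c ≠ d →
      dist (f a) (f b) = dist (f c) (f d) → (a = c ∧ b = d) ∨ (a = d ∧ b = c))
    (T : SimpleGraph V) (hT : T.IsTree)
    (hmin : ∀ T' : SimpleGraph V, T'.IsTree → weight f T ≤ weight f T')
    (u v : V) (huv : T.Adj u v) :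
    ¬ ∃ w : V, max (dist (f u) (f w)) (dist (f v) (f w)) < dist (f u) (f v) :=
  mst_subgraph_rng_general f T hT hmin u v huv
end

section
/- Greedy routing on the Delaunay graph finds the nearest neighbor: for a finite planar point set X in general position with Delaunay graph DG and any query point q, from any starting vertex, repeatedly moving to any neighbor strictly closer to q (while one exists) terminates at the vertex of X nearest to q. -/
attribute [local instance] Classical.propDecidable

open EuclideanGeometry

/-- Points of the Euclidean plane. -/
abbrev Pt : Type := EuclideanSpace ℝ (Fin 2)

/-- `X` is in general position: no three of its points are collinear and no
four of its points are cocircular. -/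
def GenPos (X : Finset Pt) : Prop :=
  (∀ s : Finset Pt, s ⊆ X → s.card = 3 → AffineIndependent ℝ (fun x : s => (x : Pt))) ∧
    (∀ s : Finset Pt, s ⊆ X → s.card = 4 → ¬ Cospherical (s : Set Pt))

/-- `u` and `v` are adjacent in the Delaunay graph of `X`: there is a circle
through `u` and `v` containing no other point of `X` in its interior. -/
def DelaunayAdj (X : Finset Pt) (u v : Pt) : Prop :=
  u ∈ X ∧ v ∈ X ∧ u ≠ v ∧
    ∃ (c : Pt) (r : ℝ), dist c u = r ∧ dist c v = r ∧
      ∀ w ∈ X, w ≠ u → w ≠ v → r ≤ dist c w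

/-- One step of greedy routing towards the query `q`: move along a Delaunay
edge to a neighbor strictly closer to `q`. -/
def GStep (X : Finset Pt) (q : Pt) (x y : Pt) : Prop :=
  DelaunayAdj X x y ∧ dist y q < dist x q

lemma key_step (X : Finset Pt) (q x : Pt) (hx : x ∈ X)
    (hnot : ∃ w ∈ X, dist w q < dist x q) : ∃ y ∈ X, GStep X q x y := by
  obtain ⟨w0, hw0X, hw0⟩ := hnot
  set d : ℝ := dist x q with hd
  have hdpos : 0 < d := lt_of_le_of_lt dist_nonneg hw0
  have hw0x : w0 ≠ x := by rintro rfl; exact lt_irrefl _ hw0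
  set S : Finset Pt := X.erase x with hS
  have hSne : S.Nonempty := ⟨w0, Finset.mem_erase.2 ⟨hw0x, hw0X⟩⟩
  set c : ℝ → Pt := fun t => x + t • (q - x) with hc
  set f : ℝ → ℝ := fun t => S.inf' hSne (fun w => dist (c t) w) - t * d with hf
  have hcont : Continuous f := by
    apply Continuous.sub
    · apply Continuous.finset_inf'_apply hSne
      intro w _
      exact Continuous.dist (by fun_prop) continuous_const
    · fun_prop
  have hdcx : ∀ t : ℝ, 0 ≤ t → dist (c t) x = t * d := by
    intro t ht
    simp only [hc, dist_eq_norm]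
    rw [add_sub_cancel_left, norm_smul, Real.norm_eq_abs, abs_of_nonneg ht]
    congr 1
    rw [hd, dist_eq_norm, ← norm_neg]; congr 1; abel
  have hdcq : ∀ t : ℝ, t ≤ 1 → dist (c t) q = (1 - t) * d := by
    intro t ht
    simp only [hc, dist_eq_norm]
    have h2 : x + t • (q - x) - q = (1 - t) • (x - q) := by
      module
    rw [h2, norm_smul, Real.norm_eq_abs, abs_of_nonneg (by linarith : (0:ℝ) ≤ 1 - t)]
    rw [hd, dist_eq_norm]
  have hf0 : 0 < f 0 := by
    simp only [hf, zero_mul, sub_zero]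
    rw [Finset.lt_inf'_iff]
    intro w hw
    have hwx : w ≠ x := (Finset.mem_erase.1 hw).1
    have hc0 : c 0 = x := by simp [hc]
    rw [hc0]
    exact dist_pos.2 (Ne.symm hwx)
  have hf1 : f 1 < 0 := by
    simp only [hf, one_mul]
    have h1 : S.inf' hSne (fun w => dist (c 1) w) ≤ dist (c 1) w0 :=
      Finset.inf'_le _ (Finset.mem_erase.2 ⟨hw0x, hw0X⟩)
    have hc1 : c 1 = q := by simp [hc]
    have h2 : dist (c 1) w0 = dist w0 q := by rw [hc1, dist_comm]
    rw [h2] at h1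
    linarith
  obtain ⟨t, ht, hft⟩ : ∃ t ∈ Set.Icc (0:ℝ) 1, f t = 0 := by
    have h := intermediate_value_Icc' (by norm_num : (0:ℝ) ≤ 1) hcont.continuousOn
      (Set.mem_Icc.2 ⟨hf1.le, hf0.le⟩)
    obtain ⟨t, ht, hft⟩ := h
    exact ⟨t, ht, hft⟩
  have ht0 : t ≠ 0 := by rintro rfl; rw [hft] at hf0; exact lt_irrefl _ hf0
  have ht1 : t ≠ 1 := by rintro rfl; rw [hft] at hf1; exact lt_irrefl _ hf1
  set r : ℝ := t * d with hr
  have hinf : S.inf' hSne (fun w => dist (c t) w) = r := by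
    have := hft; simp only [hf] at this; linarith
  obtain ⟨y, hyS, hy⟩ := Finset.exists_mem_eq_inf' hSne (fun w => dist (c t) w)
  have hyX : y ∈ X := Finset.mem_of_mem_erase hyS
  have hyx : y ≠ x := (Finset.mem_erase.1 hyS).1
  have hdcy : dist (c t) y = r := by rw [← hy, hinf]
  have hdcxr : dist (c t) x = r := hdcx t ht.1
  have hball : ∀ w ∈ X, w ≠ x → w ≠ y → r ≤ dist (c t) w := by
    intro w hwX hwx _
    rw [← hinf]
    exact Finset.inf'_le _ (Finset.mem_erase.2 ⟨hwx, hwX⟩)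
  refine ⟨y, hyX, ⟨hx, hyX, Ne.symm hyx, c t, r, hdcxr, hdcy, hball⟩, ?_⟩
  -- strict decrease
  by_contra hge
  push_neg at hge
  have hle : dist y q ≤ d := by
    calc dist y q ≤ dist y (c t) + dist (c t) q := dist_triangle _ _ _
    _ = t * d + (1 - t) * d := by rw [dist_comm y, hdcy, hdcq t ht.2, hr]
    _ = d := by ring
  have heq : dist y q = d := le_antisymm hle hge
  have hsum : dist y (c t) + dist (c t) q = dist y q := by
    rw [dist_comm y, hdcy, hdcq t ht.2, heq, hr]; ring
  have h1 : dist y (c t) = t * dist y q := by rw [dist_comm y, hdcy, heq, hr]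
  have h2 : dist (c t) q = (1 - t) * dist y q := by rw [hdcq t ht.2, heq]
  have hcy : c t = AffineMap.lineMap y q t :=
    eq_lineMap_of_dist_eq_mul_of_dist_eq_mul h1 h2
  have hcx : c t = AffineMap.lineMap x q t := by
    simp [hc, AffineMap.lineMap_apply_module]
    module
  have : y = x := by
    have h3 := hcy.symm.trans hcx
    simp only [AffineMap.lineMap_apply_module] at h3
    have h4' : (1 - t) • y = (1 - t) • x := add_right_cancel h3
    have h4 : (1 - t) • (y - x) = 0 := by rw [smul_sub, h4', sub_self]
    have h5 : (1:ℝ) - t ≠ 0 := by intro h; apply ht1; linarith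
    have := smul_eq_zero.1 h4
    rcases this with h | h
    · exact absurd h h5
    · exact sub_eq_zero.1 h
  exact hyx this

lemma exists_terminal (X : Finset Pt) (q : Pt) :
    ∀ n : ℕ, ∀ x ∈ X, (X.filter fun w => dist w q < dist x q).card ≤ n →
      ∃ z ∈ X, Relation.ReflTransGen (GStep X q) x z ∧ ∀ y ∈ X, ¬ GStep X q z y := by
  intro n
  induction n with
  | zero =>
    intro x hx hcard
    refine ⟨x, hx, Relation.ReflTransGen.refl, ?_⟩
    intro y hy hstep
    have : y ∈ X.filter fun w => dist w q < dist x q :=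
      Finset.mem_filter.2 ⟨hy, hstep.2⟩
    have := Finset.card_pos.2 ⟨y, this⟩
    omega
  | succ n ih =>
    intro x hx hcard
    by_cases hterm : ∀ y ∈ X, ¬ GStep X q x y
    · exact ⟨x, hx, Relation.ReflTransGen.refl, hterm⟩
    · push_neg at hterm
      obtain ⟨y, hyX, hstep⟩ := hterm
      have hsub : (X.filter fun w => dist w q < dist y q) ⊆
          (X.filter fun w => dist w q < dist x q) := by
        intro w hw
        rw [Finset.mem_filter] at hw ⊢
        exact ⟨hw.1, hw.2.trans hstep.2⟩
      have hymem : y ∈ X.filter fun w => dist w q < dist x q :=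
        Finset.mem_filter.2 ⟨hyX, hstep.2⟩
      have hynot : y ∉ X.filter fun w => dist w q < dist y q := by
        simp [Finset.mem_filter]
      have hlt : (X.filter fun w => dist w q < dist y q).card <
          (X.filter fun w => dist w q < dist x q).card :=
        Finset.card_lt_card (Finset.ssubset_iff_of_subset hsub |>.2 ⟨y, hymem, hynot⟩)
      obtain ⟨z, hzX, hrt, hzterm⟩ := ih y hyX (by omega)
      exact ⟨z, hzX, Relation.ReflTransGen.head hstep hrt, hzterm⟩


/-- Greedy routing on the Delaunay graph finds the nearest
neighbor: from any starting vertex `x ∈ X`, repeatedly moving to any Delaunay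
neighbor strictly closer to `q` terminates, and any terminal vertex so reached
(one with no strictly closer neighbor) is a vertex of `X` nearest to `q`. -/
theorem greedy_routing_delaunay_finds_nn
    (X : Finset Pt) (hgp : GenPos X) (q : Pt) (x : Pt) (hx : x ∈ X) :
    (∃ z ∈ X, Relation.ReflTransGen (GStep X q) x z ∧
        (∀ y ∈ X, ¬ GStep X q z y) ∧ ∀ w ∈ X, dist z q ≤ dist w q) ∧
      ∀ z ∈ X, Relation.ReflTransGen (GStep X q) x z →
        (∀ y ∈ X, ¬ GStep X q z y) → ∀ w ∈ X, dist z q ≤ dist w q := by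
  have part2 : ∀ z ∈ X, (∀ y ∈ X, ¬ GStep X q z y) → ∀ w ∈ X, dist z q ≤ dist w q := by
    intro z hz hterm w hw
    by_contra hlt
    push_neg at hlt
    obtain ⟨y, hyX, hstep⟩ := key_step X q z hz ⟨w, hw, hlt⟩
    exact hterm y hyX hstep
  obtain ⟨z, hzX, hrt, hzterm⟩ :=
    exists_terminal X q (X.filter fun w => dist w q < dist x q).card x hx le_rfl
  exact ⟨⟨z, hzX, hrt, hzterm, part2 z hzX hzterm⟩,
    fun z hz _ hterm => part2 z hz hterm⟩
end
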